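/- Let G=(V,E) be a locally finite graph, let η ∈ {0,1}^E be any configuration, let Λ be the set of furcations of η, and let S ⊆ V be finite. Then 𝒫_η(S → ∞) ≥ |Λ ∩ S|. -/

import Mathlib

open MeasureTheory Filter Set
open scoped ENNReal

namespace Percolation

variable {V : Type*}

/-- The graph spanned by the open edges of a configuration `ω : Sym2 V → Bool`. -/
def openGraph (G : SimpleGraph V) (ω : Sym2 V → Bool) : SimpleGraph V where
  Adj u w := G.Adj u w ∧ ω s(u, w) = true
  symm := by
    constructor
    intro u w h
    exact ⟨h.1.symm, by rw [Sym2.eq_swap]; exact h.2⟩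
  loopless := ⟨fun u h => G.loopless.irrefl u h.1⟩

/-- The open cluster of the vertex `v` in the configuration `ω`. -/
def cluster (G : SimpleGraph V) (ω : Sym2 V → Bool) (v : V) : Set V :=
  {u | (openGraph G ω).Reachable v u}

/-- The set `E(S)` of edges of `G` with at least one endpoint in `S`. -/
def touchingEdges (G : SimpleGraph V) (S : Set V) : Set (Sym2 V) :=
  {e | e ∈ G.edgeSet ∧ ∃ u ∈ S, u ∈ e}

/-- The set `E(K_v)` of edges of `G` with at least one endpoint in the cluster of `v`. -/
def clusterEdges (G : SimpleGraph V) (ω : Sym2 V → Bool) (v : V) : Set (Sym2 V) :=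
  touchingEdges G (cluster G ω v)

/-- `μ` is the law of Bernoulli-`p` bond percolation on `G`: it is a probability measure on
configurations under which the states of the edges of `G` are independent, each edge being
open with probability `p`.  (This characterizes `μ` on all events depending only on the states
of the edges of `G`.) -/
def IsBernoulli (G : SimpleGraph V) (p : ℝ) (μ : Measure (Sym2 V → Bool)) : Prop :=
  IsProbabilityMeasure μ ∧
    ∀ s : Finset (Sym2 V), ↑s ⊆ G.edgeSet → ∀ f : Sym2 V → Bool,
      μ {ω | ∀ e ∈ s, ω e = f e} =
        ENNReal.ofReal (p ^ (s.filter fun e => f e = true).card *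
          (1 - p) ^ (s.filter fun e => f e = false).card)

/-- The critical probability of `G`. -/
noncomputable def pc (G : SimpleGraph V) : ℝ :=
  sInf {p : ℝ | 0 ≤ p ∧ p ≤ 1 ∧
    ∀ μ : Measure (Sym2 V → Bool), IsBernoulli G p μ →
      μ {ω | ∃ u : V, (cluster G ω u).Infinite} = 1}

/-- `ζ(p) = -limsup (1/n) log P_p(n ≤ E_v < ∞)`, where `μ` is Bernoulli-`p` percolation. -/
noncomputable def zeta (G : SimpleGraph V) (v : V) (μ : Measure (Sym2 V → Bool)) : ℝ :=
  - Filter.limsup (fun n : ℕ =>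
      Real.log (μ {ω | (n : ℕ∞) ≤ (clusterEdges G ω v).encard ∧
        (clusterEdges G ω v).encard < ⊤}).toReal / (n : ℝ)) Filter.atTop

/-- A graph is (vertex-)transitive if its automorphism group acts transitively. -/
def IsTransitive (G : SimpleGraph V) : Prop :=
  ∀ u w : V, ∃ φ : G ≃g G, φ u = w

/-- A graph is quasi-transitive if its automorphism group has finitely many vertex orbits. -/
def IsQuasiTransitive (G : SimpleGraph V) : Prop :=
  ∃ S : Finset V, ∀ u : V, ∃ φ : G ≃g G, φ u ∈ S

/-- The volume `∑_{u ∈ K} deg(u)` of a set of vertices. -/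
noncomputable def vol (G : SimpleGraph V) (K : Set V) : ℝ :=
  ∑ᶠ u ∈ K, ((G.neighborSet u).ncard : ℝ)

/-- The edge boundary `∂_E K`: edges with exactly one endpoint in `K`. -/
def edgeBoundary (G : SimpleGraph V) (K : Set V) : Set (Sym2 V) :=
  {e | e ∈ G.edgeSet ∧ ∃ u w : V, e = s(u, w) ∧ u ∈ K ∧ w ∉ K}

/-- The Cheeger constant `Φ_E(G)`. -/
noncomputable def cheeger (G : SimpleGraph V) : ℝ :=
  sInf {r : ℝ | ∃ K : Set V, K.Finite ∧ K.Nonempty ∧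
    r = ((edgeBoundary G K).ncard : ℝ) / vol G K}

/-- A graph is nonamenable if its Cheeger constant is positive. -/
def Nonamenable (G : SimpleGraph V) : Prop := 0 < cheeger G

/-- The anchored Cheeger constant `Φ*_E` of (the component of `v` in) `H`, anchored at `v`. -/
noncomputable def anchoredCheeger (H : SimpleGraph V) (v : V) : ℝ :=
  ⨆ n : ℕ, sInf {r : ℝ | ∃ K : Set V, v ∈ K ∧ K.Finite ∧ n ≤ K.ncard ∧
    (SimpleGraph.induce K H).Connected ∧
    r = ((edgeBoundary H K).ncard : ℝ) / vol H K}

/-- The cluster of `v`, viewed as a subgraph of `G`. -/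
def clusterSubgraph (G : SimpleGraph V) (ω : Sym2 V → Bool) (v : V) : G.Subgraph where
  verts := cluster G ω v
  Adj u w := (openGraph G ω).Adj u w ∧ u ∈ cluster G ω v ∧ w ∈ cluster G ω v
  adj_sub h := (h.1 : G.Adj _ _ ∧ _).1
  edge_vert h := h.2.1
  symm := ⟨fun u w h => ⟨h.1.symm, h.2.2, h.2.1⟩⟩

/-- Membership in `𝓗_v`: finite connected subgraphs of `G` containing `v`. -/
def HSetMem (G : SimpleGraph V) (v : V) (H : G.Subgraph) : Prop :=
  v ∈ H.verts ∧ H.verts.Finite ∧ H.Connected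

/-- `F : 𝓗_v → ℂ` has subexponential growth:
`limsup (1/n) log sup {|F(H)| : H ∈ 𝓗_v, |E(H)| ≤ n} ≤ 0`. -/
def SubexpGrowth (G : SimpleGraph V) (v : V) (F : G.Subgraph → ℂ) : Prop :=
  Filter.limsup (fun n : ℕ =>
    Real.log (sSup {r : ℝ | ∃ H : G.Subgraph, HSetMem G v H ∧
      (touchingEdges G H.verts).ncard ≤ n ∧ r = ‖F H‖}) / (n : ℝ))
    Filter.atTop ≤ 0

-- The configuration `ω` with the edge `e` opened, i.e. `ω^e`.
open Classical in
noncomputable def updOpen (ω : Sym2 V → Bool) (e : Sym2 V) : Sym2 V → Bool :=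
  fun e' => if e' = e then true else ω e'

/-- The fluctuation `h_p(K_v) = p|∂K_v| - (1-p)|E_o(K_v)|` of the cluster of `v`. -/
noncomputable def fluct (G : SimpleGraph V) (p : ℝ) (ω : Sym2 V → Bool) (v : V) : ℝ :=
  p * ({e | e ∈ clusterEdges G ω v ∧ ω e = false}.ncard : ℝ) -
    (1 - p) * ({e | e ∈ clusterEdges G ω v ∧ ω e = true}.ncard : ℝ)

/-- `Piv(H,v,W)`: edges of `H` whose deletion disconnects `v` from some vertex of `W`. -/
def Piv (H : SimpleGraph V) (v : V) (W : Set V) : Set (Sym2 V) :=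
  {e | e ∈ H.edgeSet ∧ ∃ w ∈ W, ¬ (H.deleteEdges {e}).Reachable v w}

/-- `Br_k(K_v, v) = max {|Piv(K_v,v,W)| : W ⊆ K_v, |W| ≤ k}`. -/
noncomputable def Br (G : SimpleGraph V) (ω : Sym2 V → Bool) (v : V) (k : ℕ) : ℕ :=
  sSup {m : ℕ | ∃ W : Finset V, ↑W ⊆ cluster G ω v ∧ W.card ≤ k ∧
    m = (Piv (openGraph G ω) v ↑W).ncard}

/-- `𝒫_ω(S → ∞)`: the minimal number of edges whose removal disconnects `S` from infinity
in the open subgraph of `ω`. -/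
noncomputable def minCut (G : SimpleGraph V) (ω : Sym2 V → Bool) (S : Set V) : ℕ∞ :=
  ⨅ C ∈ {C : Set (Sym2 V) |
    ∀ s ∈ S, {u | ((openGraph G ω).deleteEdges C).Reachable s u}.Finite}, C.encard

/-- `v` is a furcation of `ω`: closing all edges incident to `v` splits the cluster of `v`
into at least three distinct infinite connected components. -/
def IsFurcation (G : SimpleGraph V) (ω : Sym2 V → Bool) (v : V) : Prop :=
  ∃ u1 u2 u3 : V,
    (openGraph G ω).Adj v u1 ∧ (openGraph G ω).Adj v u2 ∧ (openGraph G ω).Adj v u3 ∧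
    ¬ ((openGraph G ω).deleteEdges {e | v ∈ e}).Reachable u1 u2 ∧
    ¬ ((openGraph G ω).deleteEdges {e | v ∈ e}).Reachable u1 u3 ∧
    ¬ ((openGraph G ω).deleteEdges {e | v ∈ e}).Reachable u2 u3 ∧
    {x | ((openGraph G ω).deleteEdges {e | v ∈ e}).Reachable u1 x}.Infinite ∧
    {x | ((openGraph G ω).deleteEdges {e | v ∈ e}).Reachable u2 x}.Infinite ∧
    {x | ((openGraph G ω).deleteEdges {e | v ∈ e}).Reachable u3 x}.Infinite

-- The `n`-step transition probability of simple random walk on the graph `H`.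
open Classical in
noncomputable def walkProb (H : SimpleGraph V) : ℕ → V → V → ℝ
  | 0, u, w => if u = w then 1 else 0
  | n + 1, u, w => ∑ᶠ x ∈ H.neighborSet u, walkProb H n x w / ((H.neighborSet u).ncard : ℝ)

/-- Two vertices are `2`-connected in `H` if they are joined by two edge-disjoint paths. -/
def TwoConn (H : SimpleGraph V) (u w : V) : Prop :=
  ∃ p1 p2 : H.Walk u w, p1.IsPath ∧ p2.IsPath ∧ ∀ e ∈ p1.edges, e ∉ p2.edges

/-- An edge of `H` is a bridge if deleting it disconnects its endpoints. -/
def IsBridgeOf (H : SimpleGraph V) (e : Sym2 V) : Prop :=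
  e ∈ H.edgeSet ∧ ∃ u w : V, e = s(u, w) ∧ ¬ (H.deleteEdges {e}).Reachable u w

/-- `w` represents a leaf of the tree `Tr(K_v)` of `2`-connected components of the cluster of
`v`: it lies in the cluster, its `2`-connected component differs from that of `v`, and exactly
one bridge is incident to its `2`-connected component. -/
def IsTrLeaf (G : SimpleGraph V) (ω : Sym2 V → Bool) (v w : V) : Prop :=
  w ∈ cluster G ω v ∧ ¬ TwoConn (openGraph G ω) v w ∧
    {e : Sym2 V | IsBridgeOf (openGraph G ω) e ∧
      ∃ x ∈ e, TwoConn (openGraph G ω) x w}.encard = 1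

/-- `Lf_k(K_v, v)`: the maximum number of edges in a subgraph of `Tr(K_v)` spanned by the
union of the geodesics between the `2`-connected component of `v` and exactly `k` leaves
(`0` if `Tr(K_v)` has fewer than `k` leaves).  The tree edges of such a spanned subgraph are
exactly the bridges separating `v` from one of the chosen leaf representatives. -/
noncomputable def Lf (G : SimpleGraph V) (ω : Sym2 V → Bool) (v : V) (k : ℕ) : ℕ :=
  sSup {m : ℕ | ∃ w : Fin k → V, (∀ i, IsTrLeaf G ω v (w i)) ∧
    (∀ i j : Fin k, i ≠ j → ¬ TwoConn (openGraph G ω) (w i) (w j)) ∧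
    m = (⋃ i, Piv (openGraph G ω) v {w i}).ncard}

/-- `Q_k(p,n,m)`: the supremum over all countable locally finite graphs `G` and vertices `v`
of `P_p(Lf_k(K_v,v) = m and E_v = n)`. -/
noncomputable def Qk (k : ℕ) (p : ℝ) (n m : ℕ) : ℝ :=
  sSup {r : ℝ | ∃ (W : Type) (_ : Countable W) (G : SimpleGraph W) (v : W),
    (∀ u : W, (G.neighborSet u).Finite) ∧
    ∃ μ : Measure (Sym2 W → Bool), IsBernoulli G p μ ∧
      r = (μ {ω | Lf G ω v k = m ∧ (clusterEdges G ω v).encard = (n : ℕ∞)}).toReal}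

/-- `α(p) = sup {α ∈ [0,p] : α^{-α} (1-α)^{-(1-α)} (p/(1-p))^α < e^{ζ(p)}}`. -/
noncomputable def alphaP (G : SimpleGraph V) (v : V) (p : ℝ)
    (μ : Measure (Sym2 V → Bool)) : ℝ :=
  sSup {α : ℝ | 0 ≤ α ∧ α ≤ p ∧
    α ^ (-α) * (1 - α) ^ (-(1 - α)) * (p / (1 - p)) ^ α < Real.exp (zeta G v μ)}

/-! Induction on the size of a finite cut `C`.  If some furcation lies in `S`, its component
in `H \ C` is finite but its own component is infinite, so some `e = xy ∈ C` has an endpoint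
`y` with infinite component in `H \ C`.  Closing `e` turns `C \ {e}` into a cut, and destroys
at most one furcation whose `H \ C`-component is finite: such a furcation `w` can only be
destroyed if `x` is attached to `w` through a finite piece hanging off `w`, and two such
furcations `w₁ ≠ w₂` would each have to separate `x` from the other, which a shortest walk
from `x` to `w₁` rules out. -/

section Furcations

open SimpleGraph

variable {H : SimpleGraph V} {a b w x y : V}

def reachSet (H : SimpleGraph V) (a : V) : Set V := {b | H.Reachable a b}

/-- `IsFurcation` for an arbitrary graph in place of the open subgraph of a configuration. -/
def IsFurcationOf (H : SimpleGraph V) (v : V) : Prop :=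
  ∃ u1 u2 u3 : V, H.Adj v u1 ∧ H.Adj v u2 ∧ H.Adj v u3 ∧
    ¬ (H.deleteEdges {e | v ∈ e}).Reachable u1 u2 ∧
    ¬ (H.deleteEdges {e | v ∈ e}).Reachable u1 u3 ∧
    ¬ (H.deleteEdges {e | v ∈ e}).Reachable u2 u3 ∧
    (reachSet (H.deleteEdges {e | v ∈ e}) u1).Infinite ∧
    (reachSet (H.deleteEdges {e | v ∈ e}) u2).Infinite ∧
    (reachSet (H.deleteEdges {e | v ∈ e}) u3).Infinite

lemma reachSet_subset_of_reachable (h : H.Reachable a b) : reachSet H b ⊆ reachSet H a :=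
  fun _ hz => h.trans hz

lemma reachSet_mono {H' : SimpleGraph V} (h : H ≤ H') (a : V) : reachSet H a ⊆ reachSet H' a :=
  fun _ hb => hb.mono h

lemma reachable_deleteEdges_of_walk {D : Set (Sym2 V)} (p : H.Walk a b)
    (hD : ∀ f ∈ D, ∃ t ∈ f, t ∉ p.support) : (H.deleteEdges D).Reachable a b :=
  ⟨p.toDeleteEdges D fun f hf hfD =>
    let ⟨_, htf, ht⟩ := hD f hfD
    ht (p.mem_support_of_mem_edges hf htf)⟩

lemma reachSet_subset_reachSet_deleteEdges {T : Set V} {D : Set (Sym2 V)}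
    (hT : ∀ t ∈ T, ¬ H.Reachable a t) (hD : ∀ f ∈ D, ∃ t ∈ T, t ∈ f) :
    reachSet H a ⊆ reachSet (H.deleteEdges D) a := by
  classical
  rintro b ⟨p⟩
  refine reachable_deleteEdges_of_walk p fun f hf => ?_
  obtain ⟨t, htT, htf⟩ := hD f hf
  exact ⟨t, htf, fun ht => hT t htT ⟨p.takeUntil t ht⟩⟩

lemma reachable_deleteEdges_or_exists (C : Set (Sym2 V)) (p : H.Walk a b) :
    (H.deleteEdges C).Reachable a b ∨ ∃ e ∈ C, ∃ z ∈ e, (H.deleteEdges C).Reachable z b := by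
  induction p with
  | nil => exact Or.inl .rfl
  | @cons a c b h q ih =>
    by_cases hc : s(a, c) ∈ C
    · exact Or.inr (ih.elim (fun h => ⟨s(a, c), hc, c, Sym2.mem_mk_right _ _, h⟩) id)
    · have hadj : (H.deleteEdges C).Adj a c := (deleteEdges_adj ..).mpr ⟨h, hc⟩
      exact ih.imp_left hadj.reachable.trans

/-- A shortest walk from `x` to `w₁` through `w₂` would already pass `w₁` before `w₂`. -/
lemma reachable_deleteEdges_or_of_reachable {w₁ w₂ : V} (h : H.Reachable x w₁)
    (hne : w₁ ≠ w₂) :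
    (H.deleteEdges {f | w₂ ∈ f}).Reachable x w₁ ∨
      (H.deleteEdges {f | w₁ ∈ f}).Reachable x w₂ := by
  classical
  by_contra! hcon
  obtain ⟨p, hp⟩ := h.exists_walk_length_eq_dist
  have hw₂ : w₂ ∈ p.support := by
    by_contra hs
    exact hcon.1 (reachable_deleteEdges_of_walk p fun f hf => ⟨w₂, hf, hs⟩)
  have hw₁ : w₁ ∈ (p.takeUntil w₂ hw₂).support := by
    by_contra hs
    exact hcon.2 (reachable_deleteEdges_of_walk _ fun f hf => ⟨w₁, hf, hs⟩)
  have := dist_le ((p.takeUntil w₂ hw₂).takeUntil w₁ hw₁)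
  have := (p.takeUntil w₂ hw₂).length_takeUntil_le_length hw₁
  have := p.length_takeUntil_lt_length hw₂ hne.symm
  omega

lemma exists_not_reachable_of_pairwise {P : V → Prop} {u1 u2 u3 : V} (a b : V)
    (h12 : ¬ H.Reachable u1 u2) (h13 : ¬ H.Reachable u1 u3) (h23 : ¬ H.Reachable u2 u3)
    (h1 : P u1) (h2 : P u2) (h3 : P u3) :
    ∃ u, P u ∧ ¬ H.Reachable u a ∧ ¬ H.Reachable u b := by
  have sep : ∀ {p q c : V}, ¬ H.Reachable p q → H.Reachable p c → ¬ H.Reachable q c :=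
    fun h hp hq => h (hp.trans hq.symm)
  by_cases h1a : H.Reachable u1 a
  · by_cases h2b : H.Reachable u2 b
    · exact ⟨u3, h3, sep h13 h1a, sep h23 h2b⟩
    · exact ⟨u2, h2, sep h12 h1a, h2b⟩
  by_cases h1b : H.Reachable u1 b
  · by_cases h2a : H.Reachable u2 a
    · exact ⟨u3, h3, sep h23 h2a, sep h13 h1b⟩
    · exact ⟨u2, h2, h2a, sep h12 h1b⟩
  exact ⟨u1, h1, h1a, h1b⟩

namespace IsFurcationOf

lemma reachSet_infinite (hw : IsFurcationOf H w) : (reachSet H w).Infinite := by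
  obtain ⟨u, _, _, hu, -, -, -, -, -, hinf, -, -⟩ := hw
  exact hinf.mono fun z hz => hu.reachable.trans (hz.mono (deleteEdges_le _))

/-- One of the three branches at `w` avoids both `a` and `b`. -/
lemma reachSet_deleteEdges_infinite {D : Set (Sym2 V)} (hw : IsFurcationOf H w)
    (hwa : w ≠ a) (hwb : w ≠ b) (hD : ∀ f ∈ D, a ∈ f ∨ b ∈ f) :
    (reachSet (H.deleteEdges D) w).Infinite := by
  obtain ⟨u1, u2, u3, h1, h2, h3, h12, h13, h23, i1, i2, i3⟩ := hw
  obtain ⟨u, ⟨hu, hinf⟩, hua, hub⟩ := exists_not_reachable_of_pairwise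
    (P := fun u => H.Adj w u ∧ (reachSet (H.deleteEdges {e | w ∈ e}) u).Infinite)
    a b h12 h13 h23 ⟨h1, i1⟩ ⟨h2, i2⟩ ⟨h3, i3⟩
  have hadj : (H.deleteEdges D).Adj w u := by
    refine (deleteEdges_adj ..).mpr ⟨hu, fun hf => ?_⟩
    rcases hD _ hf with h | h <;> rcases Sym2.mem_iff.mp h with rfl | rfl
    exacts [hwa rfl, hua .rfl, hwb rfl, hub .rfl]
  have hbranch := reachSet_subset_reachSet_deleteEdges (T := {a, b}) (D := D)
    (fun t ht => ht.elim (· ▸ hua) (· ▸ hub))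
    (fun f hf => (hD f hf).elim (⟨a, .inl rfl, ·⟩) (⟨b, .inr rfl, ·⟩))
  refine (hinf.mono hbranch).mono ((reachSet_mono ?_ u).trans
    (reachSet_subset_of_reachable hadj.reachable))
  exact deleteEdges_mono (deleteEdges_le _)

lemma exists_mem_reachSet_infinite {C : Set (Sym2 V)} (hw : IsFurcationOf H w) (hC : C.Finite)
    (hwC : (reachSet (H.deleteEdges C) w).Finite) :
    ∃ e ∈ C, ∃ z ∈ e, (reachSet (H.deleteEdges C) z).Infinite := by
  classical
  by_contra! hcon
  have hends : (⋃ e ∈ C, ⋃ z ∈ e.toFinset, reachSet (H.deleteEdges C) z).Finite :=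
    hC.biUnion fun e he =>
      e.toFinset.finite_toSet.biUnion fun z hz => hcon e he z (Sym2.mem_toFinset.mp hz)
  refine hw.reachSet_infinite ((hwC.union hends).subset ?_)
  rintro b ⟨p⟩
  rcases reachable_deleteEdges_or_exists C p with h | ⟨e, he, z, hz, h⟩
  · exact .inl h
  · exact .inr (Set.mem_biUnion he (Set.mem_biUnion (Sym2.mem_toFinset.mpr hz) h))

lemma deleteEdges_singleton (hw : IsFurcationOf H w) (hwx : w ≠ x) (hwy : w ≠ y)
    (hy : (reachSet (H.deleteEdges ({s(x, y)} ∪ {f | w ∈ f})) y).Infinite)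
    (hx : (H.deleteEdges {s(x, y)}).Reachable x w →
      (reachSet (H.deleteEdges ({s(x, y)} ∪ {f | w ∈ f})) x).Infinite) :
    IsFurcationOf (H.deleteEdges {s(x, y)}) w := by
  set K := H.deleteEdges ({s(x, y)} ∪ {f | w ∈ f})
  have hK : (H.deleteEdges {s(x, y)}).deleteEdges {f | w ∈ f} = K := deleteEdges_deleteEdges _ _
  have hKle : K ≤ H.deleteEdges {f | w ∈ f} := deleteEdges_anti Set.subset_union_right
  have hadj : ∀ {u}, H.Adj w u → (H.deleteEdges {s(x, y)}).Adj w u := fun hu =>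
    (deleteEdges_adj ..).mpr ⟨hu, fun h => (Sym2.eq_iff.mp h).elim (hwx ·.1) (hwy ·.1)⟩
  have hbranch : ∀ {u}, H.Adj w u → (reachSet (H.deleteEdges {f | w ∈ f}) u).Infinite →
      (reachSet K u).Infinite := by
    intro u hu hinf
    by_cases hux : K.Reachable u x
    · have hxw := (hux.mono (hK ▸ deleteEdges_le _)).symm.trans (hadj hu).reachable.symm
      exact (hx hxw).mono (reachSet_subset_of_reachable hux)
    by_cases huy : K.Reachable u y
    · exact hy.mono (reachSet_subset_of_reachable huy)
    refine hinf.mono ?_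
    rintro z ⟨p⟩
    have hK' : (H.deleteEdges {f | w ∈ f}).deleteEdges {s(x, y)} = K := by
      rw [deleteEdges_deleteEdges, Set.union_comm]
    rcases reachable_deleteEdges_or_exists {s(x, y)} p.reverse with h | ⟨e, rfl, t, ht, h⟩
    · exact (hK' ▸ h).symm
    · rcases Sym2.mem_iff.mp ht with rfl | rfl
      exacts [absurd (hK' ▸ h).symm hux, absurd (hK' ▸ h).symm huy]
  obtain ⟨u1, u2, u3, h1, h2, h3, h12, h13, h23, i1, i2, i3⟩ := hw
  refine ⟨u1, u2, u3, hadj h1, hadj h2, hadj h3, ?_⟩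
  rw [hK]
  exact ⟨fun h => h12 (h.mono hKle), fun h => h13 (h.mono hKle), fun h => h23 (h.mono hKle),
    hbranch h1 i1, hbranch h2 i2, hbranch h3 i3⟩

lemma reachable_and_finite_of_not_deleteEdges {C : Set (Sym2 V)} (hw : IsFurcationOf H w)
    (hw' : ¬ IsFurcationOf (H.deleteEdges {s(x, y)}) w) (hxy : s(x, y) ∈ C)
    (hwC : (reachSet (H.deleteEdges C) w).Finite)
    (hyC : (reachSet (H.deleteEdges C) y).Infinite) (hwx : w ≠ x) :
    (H.deleteEdges {s(x, y)}).Reachable x w ∧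
      (reachSet (H.deleteEdges ({s(x, y)} ∪ {f | w ∈ f})) x).Finite := by
  have hwy : w ≠ y := by
    rintro rfl
    exact hyC hwC
  have hyw : ¬ (H.deleteEdges C).Reachable y w := fun h =>
    hyC (hwC.subset (reachSet_subset_of_reachable h.symm))
  have hy : (reachSet (H.deleteEdges ({s(x, y)} ∪ {f | w ∈ f})) y).Infinite := by
    refine (hyC.mono (reachSet_subset_reachSet_deleteEdges (T := {w}) (D := {f | w ∈ f})
      (fun t ht => ht ▸ hyw) (fun f hf => ⟨w, rfl, hf⟩))).mono (reachSet_mono ?_ y)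
    rw [deleteEdges_deleteEdges]
    exact deleteEdges_anti (Set.union_subset_union_left _ (Set.singleton_subset_iff.mpr hxy))
  by_contra hcon
  exact hw' (hw.deleteEdges_singleton hwx hwy hy fun hxw hfin => hcon ⟨hxw, hfin⟩)

end IsFurcationOf

lemma subsingleton_furcations_destroyed {C : Set (Sym2 V)} (hxy : s(x, y) ∈ C)
    (hyC : (reachSet (H.deleteEdges C) y).Infinite) :
    {w | IsFurcationOf H w ∧ ¬ IsFurcationOf (H.deleteEdges {s(x, y)}) w ∧
      (reachSet (H.deleteEdges C) w).Finite}.Subsingleton := by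
  intro w₁ hw₁ w₂ hw₂
  by_contra hne
  wlog hw₂x : w₂ ≠ x generalizing w₁ w₂
  · exact this hw₂ hw₁ (Ne.symm hne) fun h => hne (h.trans (not_not.mp hw₂x).symm)
  obtain ⟨hf₁, hd₁, hfin₁⟩ := hw₁
  obtain ⟨hf₂, hd₂, hfin₂⟩ := hw₂
  obtain ⟨-, hx₂⟩ := hf₂.reachable_and_finite_of_not_deleteEdges hd₂ hxy hfin₂ hyC hw₂x
  by_cases hw₁x : w₁ = x
  · subst hw₁x
    have hw₁y : w₁ ≠ y := by
      rintro rfl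
      exact hyC hfin₁
    exact hf₁.reachSet_deleteEdges_infinite hw₁y hne
      (fun f hf => Or.imp_left (fun h : f = s(w₁, y) => h ▸ Sym2.mem_mk_right w₁ y) hf) hx₂
  obtain ⟨hr₁, hx₁⟩ := hf₁.reachable_and_finite_of_not_deleteEdges hd₁ hxy hfin₁ hyC hw₁x
  have hD : ∀ v, ∀ f ∈ ({s(x, y)} ∪ {f | v ∈ f} : Set (Sym2 V)), x ∈ f ∨ v ∈ f :=
    fun _ f hf => Or.imp_left (fun h : f = s(x, y) => h ▸ Sym2.mem_mk_left x y) hf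
  rcases reachable_deleteEdges_or_of_reachable hr₁ hne with h | h <;>
    rw [deleteEdges_deleteEdges] at h
  · exact hf₁.reachSet_deleteEdges_infinite hw₁x hne (hD w₂)
      |>.mono (reachSet_subset_of_reachable h) <| hx₂
  · exact hf₂.reachSet_deleteEdges_infinite hw₂x (Ne.symm hne) (hD w₁)
      |>.mono (reachSet_subset_of_reachable h) <| hx₁

lemma encard_furcations_inter_le_deleteEdges_add_one {S : Set V} {C : Set (Sym2 V)}
    (hS : ∀ s ∈ S, (reachSet (H.deleteEdges C) s).Finite) (hxy : s(x, y) ∈ C)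
    (hyC : (reachSet (H.deleteEdges C) y).Infinite) :
    ({v | IsFurcationOf H v} ∩ S).encard ≤
      ({v | IsFurcationOf (H.deleteEdges {s(x, y)}) v} ∩ S).encard + 1 := by
  set A := {v | IsFurcationOf H v} ∩ S
  set B := {v | IsFurcationOf (H.deleteEdges {s(x, y)}) v} ∩ S
  have hdestroyed : A \ B ⊆ {w | IsFurcationOf H w ∧
      ¬ IsFurcationOf (H.deleteEdges {s(x, y)}) w ∧ (reachSet (H.deleteEdges C) w).Finite} :=
    fun w ⟨⟨hw, hwS⟩, hw'⟩ => ⟨hw, fun h => hw' ⟨h, hwS⟩, hS w hwS⟩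
  calc A.encard ≤ (A \ B).encard + B.encard := Set.encard_le_encard_sdiff_add_encard A B
    _ ≤ 1 + B.encard := by
        gcongr
        exact Set.encard_le_one_iff_subsingleton.mpr
          ((subsingleton_furcations_destroyed hxy hyC).anti hdestroyed)
    _ = B.encard + 1 := add_comm _ _

lemma encard_furcations_inter_le_card (H : SimpleGraph V) (S : Set V) (C : Finset (Sym2 V))
    (hS : ∀ s ∈ S, (reachSet (H.deleteEdges C) s).Finite) :
    ({v | IsFurcationOf H v} ∩ S).encard ≤ C.card := by
  classical
  induction C using Finset.strongInduction generalizing H with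
  | H C ih =>
  obtain h | ⟨v, hv, hvS⟩ := ({v | IsFurcationOf H v} ∩ S).eq_empty_or_nonempty
  · simp [h]
  obtain ⟨e, he, y, hye, hy⟩ := hv.exists_mem_reachSet_infinite C.finite_toSet (hS v hvS)
  obtain ⟨x, rfl⟩ : ∃ x, e = s(x, y) := by
    obtain ⟨x, hx⟩ := Sym2.mem_iff_exists.mp hye
    exact ⟨x, hx.trans Sym2.eq_swap⟩
  have hcut : (H.deleteEdges {s(x, y)}).deleteEdges ↑(C.erase s(x, y)) = H.deleteEdges C := by
    rw [deleteEdges_deleteEdges, Finset.coe_erase,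
      Set.union_sdiff_cancel (Set.singleton_subset_iff.mpr he)]
  calc _ ≤ ({v | IsFurcationOf (H.deleteEdges {s(x, y)}) v} ∩ S).encard + 1 :=
        encard_furcations_inter_le_deleteEdges_add_one hS he hy
    _ ≤ (C.erase s(x, y)).card + 1 := by
        gcongr
        exact ih _ (Finset.erase_ssubset he) _ (hcut ▸ hS)
    _ = C.card := by
        norm_cast
        exact Finset.card_erase_add_one he

end Furcations

theorem furcations_le_minCut_general
    {V : Type*} (G : SimpleGraph V)
    (η : Sym2 V → Bool) (S : Set V) :
    ({u : V | IsFurcation G η u} ∩ S).encard ≤ minCut G η S := by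
  refine le_iInf₂ fun C hC => ?_
  obtain hfin | hinf := C.finite_or_infinite
  · rw [hfin.encard_eq_coe_toFinset_card]
    exact encard_furcations_inter_le_card (openGraph G η) S hfin.toFinset
      (by rw [hfin.coe_toFinset]; exact hC)
  · simp [hinf.encard_eq]

/-- **Inequality (2.2).**  Let `G` be a locally finite graph, `η ∈ {0,1}^E` a
configuration, `Λ` the set of furcations of `η` and `S ⊆ V` finite.  Then
`𝒫_η(S → ∞) ≥ |Λ ∩ S|`. -/
theorem furcations_le_minCut
    {V : Type*} (G : SimpleGraph V)
    (hlf : ∀ u : V, (G.neighborSet u).Finite)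
    (η : Sym2 V → Bool) (S : Set V) (hS : S.Finite) :
    ({u : V | IsFurcation G η u} ∩ S).encard ≤ minCut G η S :=
  furcations_le_minCut_general G η S

end Percolation
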